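/- arXiv:2312.07050 — 5 statements merged into one kernel-verified Lean document; each statement's English description precedes it below -/
import Mathlib

section
/- Define g(μ, x) = μ log(∑_{i=1}^n exp(x_i/μ)) − μ log n for μ > 0 and x ∈ ℝ^n. Then for every fixed x, the partial derivative of g with respect to μ satisfies −log n ≤ ∂g/∂μ ≤ 0. -/
/-!
Writing `p = softmax (x / μ)`, a direct computation gives
`∂g/∂μ = log (∑ exp (x i / μ)) - ∑ p i * (x i / μ) - log n = H(p) - log n`,
where `H(p) = ∑ negMulLog (p i)` is the Shannon entropy of the probability vector `p`.
The claim is then the classical bound `0 ≤ H(p) ≤ log n`, the upper half being Jensen's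
inequality for the concave function `negMulLog` with uniform weights.
-/

open Finset Real

noncomputable def softmax {ι : Type*} [Fintype ι] (y : ι → ℝ) (i : ι) : ℝ :=
  exp (y i) / ∑ j, exp (y j)

namespace softmax

variable {ι : Type*} [Fintype ι]

lemma sum_exp_pos [Nonempty ι] (y : ι → ℝ) : 0 < ∑ j, exp (y j) :=
  sum_pos (fun j _ => exp_pos (y j)) univ_nonempty

lemma nonneg (y : ι → ℝ) (i : ι) : 0 ≤ softmax y i :=
  div_nonneg (exp_pos _).le (sum_nonneg fun j _ => (exp_pos (y j)).le)

lemma sum_eq_one [Nonempty ι] (y : ι → ℝ) : ∑ i, softmax y i = 1 := by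
  simp only [softmax, ← sum_div, div_self (sum_exp_pos y).ne']

lemma sum_negMulLog [Nonempty ι] (y : ι → ℝ) :
    ∑ i, negMulLog (softmax y i) = log (∑ j, exp (y j)) - ∑ i, softmax y i * y i := by
  have hlog : ∀ i, log (softmax y i) = y i - log (∑ j, exp (y j)) := fun i => by
    rw [softmax, log_div (exp_pos _).ne' (sum_exp_pos y).ne', log_exp]
  simp only [negMulLog, hlog]
  calc ∑ i, -softmax y i * (y i - log (∑ j, exp (y j)))
      = (∑ i, softmax y i) * log (∑ j, exp (y j)) - ∑ i, softmax y i * y i := by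
        rw [sum_mul, ← sum_sub_distrib]; exact sum_congr rfl fun i _ => by ring
    _ = _ := by rw [sum_eq_one, one_mul]

end softmax

section entropy

variable {ι : Type*} [Fintype ι] {p : ι → ℝ}

lemma sum_negMulLog_nonneg (h0 : ∀ i, 0 ≤ p i) (h1 : ∑ i, p i = 1) :
    0 ≤ ∑ i, negMulLog (p i) :=
  sum_nonneg fun i _ => negMulLog_nonneg (h0 i)
    (h1 ▸ single_le_sum (fun j _ => h0 j) (mem_univ i))

lemma sum_negMulLog_le_log_card (h0 : ∀ i, 0 ≤ p i) (h1 : ∑ i, p i = 1) :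
    ∑ i, negMulLog (p i) ≤ log (Fintype.card ι) := by
  have : Nonempty ι := by
    by_contra h
    simp [not_nonempty_iff.mp h] at h1
  have hn : (0 : ℝ) < Fintype.card ι := by exact_mod_cast Fintype.card_pos
  have hJ := concaveOn_negMulLog.le_map_sum (t := univ) (w := fun _ => (Fintype.card ι : ℝ)⁻¹)
    (p := p) (fun _ _ => inv_nonneg.mpr hn.le) (by simp [hn.ne']) (fun i _ => h0 i)
  simp only [smul_eq_mul, ← mul_sum, h1, mul_one] at hJ
  rw [negMulLog, log_inv, mul_neg, neg_mul, neg_neg, inv_mul_le_iff₀ hn] at hJ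
  rwa [← mul_assoc, mul_inv_cancel₀ hn.ne', one_mul] at hJ

end entropy

lemma hasDerivAt_mul_log_sum_exp_div {ι : Type*} [Fintype ι] [Nonempty ι] (x : ι → ℝ)
    {μ : ℝ} (hμ : μ ≠ 0) :
    HasDerivAt (fun μ => μ * log (∑ i, exp (x i / μ)))
      (∑ i, negMulLog (softmax (fun j => x j / μ) i)) μ := by
  have hS : HasDerivAt (fun μ => ∑ i, exp (x i / μ)) (∑ i, exp (x i / μ) * (-x i / μ ^ 2)) μ :=
    HasDerivAt.fun_sum fun i _ => by
      simpa [div_eq_mul_inv, neg_div] using ((hasDerivAt_inv hμ).const_mul (x i)).exp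
  refine ((hasDerivAt_id μ).mul (hS.log (softmax.sum_exp_pos _).ne')).congr_deriv ?_
  rw [softmax.sum_negMulLog]
  simp only [softmax, id, one_mul, mul_div_assoc', mul_sum, sum_div, sub_eq_add_neg,
    ← sum_neg_distrib]
  congr 1
  refine sum_congr rfl fun i _ => ?_
  field_simp

theorem stmt_8 (n : ℕ) (hn : 1 ≤ n) (x : Fin n → ℝ) :
    ∀ μ : ℝ, 0 < μ → ∀ d : ℝ,
      HasDerivAt (fun μ : ℝ => μ * Real.log (∑ i, Real.exp (x i / μ)) - μ * Real.log n) d μ →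
        -Real.log n ≤ d ∧ d ≤ 0 := by
  intro μ hμ d hd
  have : Nonempty (Fin n) := ⟨⟨0, hn⟩⟩
  have hg := (hasDerivAt_mul_log_sum_exp_div x hμ.ne').sub ((hasDerivAt_id' μ).mul_const (log n))
  rw [one_mul] at hg
  have hd_eq := hd.unique hg
  have hp0 := softmax.nonneg fun i => x i / μ
  have hp1 := softmax.sum_eq_one fun i => x i / μ
  have hH_nonneg := sum_negMulLog_nonneg hp0 hp1
  have hH_le := sum_negMulLog_le_log_card hp0 hp1
  rw [Fintype.card_fin] at hH_le
  constructor <;> linarith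
end

section
/- Define g_μ(x) = μ log(∑_{i=1}^n exp(x_i/μ)) − μ log n for μ > 0 and g_0(x) = max_i x_i. Then for any x ∈ ℝ^n and μ_1 ≥ μ_2 ≥ 0, we have 0 ≤ g_{μ_2}(x) − g_{μ_1}(x) ≤ (log n)(μ_1 − μ_2). -/
open Finset

theorem stmt_9 (n : ℕ) (hn : 1 ≤ n) (x : Fin n → ℝ)
    (g : ℝ → (Fin n → ℝ) → ℝ)
    (hg : ∀ μ : ℝ, 0 < μ → ∀ y : Fin n → ℝ,
      g μ y = μ * Real.log (∑ i, Real.exp (y i / μ)) - μ * Real.log n)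
    (hg0 : ∀ y : Fin n → ℝ, g 0 y = ⨆ i, y i) :
    ∀ μ₁ μ₂ : ℝ, 0 ≤ μ₂ → μ₂ ≤ μ₁ →
      0 ≤ g μ₂ x - g μ₁ x ∧ g μ₂ x - g μ₁ x ≤ Real.log n * (μ₁ - μ₂) := by
  have hne : Nonempty (Fin n) := ⟨⟨0, hn⟩⟩
  have hnpos : (0:ℝ) < n := by exact_mod_cast hn
  have hlogn : 0 ≤ Real.log n := Real.log_nonneg (by exact_mod_cast hn)
  -- the max and an index achieving it
  obtain ⟨i₀, hi₀⟩ := Finite.exists_max x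
  have hM : (⨆ i, x i) = x i₀ := by
    apply le_antisymm (ciSup_le hi₀)
    exact le_ciSup (Set.Finite.bddAbove (Set.finite_range x)) i₀
  -- positivity of sums
  have hSpos : ∀ μ : ℝ, 0 < ∑ i, Real.exp (x i / μ) := fun μ =>
    Finset.sum_pos (fun i _ => Real.exp_pos _) Finset.univ_nonempty
  -- sandwich: for μ > 0, max ≤ μ log S μ  and  μ log S μ ≤ max + μ log n
  have sandwich : ∀ μ : ℝ, 0 < μ →
      x i₀ ≤ μ * Real.log (∑ i, Real.exp (x i / μ)) ∧
      μ * Real.log (∑ i, Real.exp (x i / μ)) ≤ x i₀ + μ * Real.log n := by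
    intro μ hμ
    constructor
    · have h1 : Real.exp (x i₀ / μ) ≤ ∑ i, Real.exp (x i / μ) :=
        Finset.single_le_sum (f := fun i => Real.exp (x i / μ))
          (fun i _ => (Real.exp_pos _).le) (Finset.mem_univ i₀)
      have h2 : x i₀ / μ ≤ Real.log (∑ i, Real.exp (x i / μ)) := by
        rw [← Real.log_exp (x i₀ / μ)]
        exact Real.log_le_log (Real.exp_pos _) h1
      calc x i₀ = μ * (x i₀ / μ) := by field_simp
        _ ≤ μ * Real.log (∑ i, Real.exp (x i / μ)) := by
            exact mul_le_mul_of_nonneg_left h2 hμ.le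
    · have h1 : (∑ i, Real.exp (x i / μ)) ≤ ∑ _i : Fin n, Real.exp (x i₀ / μ) :=
        Finset.sum_le_sum (fun i _ => Real.exp_le_exp.2 (by gcongr; exact hi₀ i))
      have h2 : Real.log (∑ i, Real.exp (x i / μ)) ≤ Real.log (n * Real.exp (x i₀ / μ)) := by
        apply Real.log_le_log (hSpos μ)
        simpa [Finset.sum_const, Finset.card_univ, nsmul_eq_mul] using h1
      rw [Real.log_mul (ne_of_gt hnpos) (Real.exp_ne_zero _), Real.log_exp] at h2
      calc μ * Real.log (∑ i, Real.exp (x i / μ)) ≤ μ * (Real.log n + x i₀ / μ) :=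
            mul_le_mul_of_nonneg_left h2 hμ.le
        _ = x i₀ + μ * Real.log n := by field_simp; ring
  -- the core claim for two positive parameters
  have core : ∀ μ₁ μ₂ : ℝ, 0 < μ₂ → μ₂ ≤ μ₁ →
      μ₁ * Real.log (∑ i, Real.exp (x i / μ₁)) ≤
        (μ₁ - μ₂) * Real.log n + μ₂ * Real.log (∑ i, Real.exp (x i / μ₂)) ∧
      μ₂ * Real.log (∑ i, Real.exp (x i / μ₂)) ≤
        μ₁ * Real.log (∑ i, Real.exp (x i / μ₁)) := by
    intro μ₁ μ₂ hμ₂ h12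
    have hμ₁ : 0 < μ₁ := lt_of_lt_of_le hμ₂ h12
    set p : ℝ := μ₁ / μ₂ with hp
    have hp1 : 1 ≤ p := (one_le_div hμ₂).2 h12
    have hpμ : μ₂ * p = μ₁ := by rw [hp]; field_simp
    have hkey : ∀ i : Fin n, Real.exp (x i / μ₁) ^ p = Real.exp (x i / μ₂) := by
      intro i
      rw [← Real.exp_mul]
      congr 1
      rw [hp, div_mul_div_comm, mul_comm (x i) μ₁, mul_div_mul_left _ _ hμ₁.ne']
    set S₁ : ℝ := ∑ i, Real.exp (x i / μ₁) with hS₁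
    set S₂ : ℝ := ∑ i, Real.exp (x i / μ₂) with hS₂
    have hS₁pos : 0 < S₁ := hSpos μ₁
    have hS₂pos : 0 < S₂ := hSpos μ₂
    have hmulp : ∀ a : ℝ, 0 < a → a ^ (p - 1) * a = a ^ p := by
      intro a ha
      calc a ^ (p - 1) * a = a ^ (p - 1) * a ^ (1 : ℝ) := by rw [Real.rpow_one]
        _ = a ^ (p - 1 + 1) := (Real.rpow_add ha _ _).symm
        _ = a ^ p := by ring_nf
    constructor
    · -- S₁ ^ p ≤ n ^ (p-1) * S₂
      have h1 : S₁ ^ p ≤ (n : ℝ) ^ (p - 1) * S₂ := by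
        have := Real.rpow_sum_le_const_mul_sum_rpow_of_nonneg (Finset.univ : Finset (Fin n))
          (f := fun i => Real.exp (x i / μ₁)) hp1 (fun i _ => (Real.exp_pos _).le)
        simpa [hkey, Finset.card_univ] using this
      have h2 : p * Real.log S₁ ≤ (p - 1) * Real.log n + Real.log S₂ := by
        have := Real.log_le_log (Real.rpow_pos_of_pos hS₁pos p) h1
        rwa [Real.log_rpow hS₁pos, Real.log_mul (ne_of_gt (Real.rpow_pos_of_pos hnpos _))
          (ne_of_gt hS₂pos), Real.log_rpow hnpos] at this
      have h3 := mul_le_mul_of_nonneg_left h2 hμ₂.le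
      calc μ₁ * Real.log S₁ = μ₂ * (p * Real.log S₁) := by rw [← mul_assoc, hpμ]
        _ ≤ μ₂ * ((p - 1) * Real.log n + Real.log S₂) := h3
        _ = (μ₁ - μ₂) * Real.log n + μ₂ * Real.log S₂ := by
            have : μ₂ * (p - 1) = μ₁ - μ₂ := by rw [mul_sub, hpμ]; ring
            rw [mul_add, ← mul_assoc, this]
    · -- S₂ ≤ S₁ ^ p
      have h1 : S₂ ≤ S₁ ^ p := by
        have hterm : ∀ i : Fin n, Real.exp (x i / μ₂) ≤ S₁ ^ (p - 1) * Real.exp (x i / μ₁) := by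
          intro i
          rw [← hkey i]
          rw [← hmulp _ (Real.exp_pos _)]
          apply mul_le_mul_of_nonneg_right _ (Real.exp_pos _).le
          apply Real.rpow_le_rpow (Real.exp_pos _).le _ (by linarith)
          rw [hS₁]
          exact Finset.single_le_sum (f := fun j => Real.exp (x j / μ₁))
            (fun j _ => (Real.exp_pos _).le) (Finset.mem_univ i)
        calc S₂ ≤ ∑ i, S₁ ^ (p - 1) * Real.exp (x i / μ₁) :=
              Finset.sum_le_sum (fun i _ => hterm i)
          _ = S₁ ^ (p - 1) * S₁ := by rw [← Finset.mul_sum]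
          _ = S₁ ^ p := hmulp S₁ hS₁pos
      have h2 : Real.log S₂ ≤ p * Real.log S₁ := by
        have := Real.log_le_log hS₂pos h1
        rwa [Real.log_rpow hS₁pos] at this
      calc μ₂ * Real.log S₂ ≤ μ₂ * (p * Real.log S₁) :=
            mul_le_mul_of_nonneg_left h2 hμ₂.le
        _ = μ₁ * Real.log S₁ := by rw [← mul_assoc, hpμ]
  -- main proof
  intro μ₁ μ₂ hμ₂ h12
  rcases eq_or_lt_of_le hμ₂ with h0 | hμ₂pos
  · -- μ₂ = 0
    rcases eq_or_lt_of_le h12 with h1 | hμ₁pos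
    · -- μ₁ = μ₂
      rw [← h1]
      constructor <;> simp [← h0, ← h1]
    · -- 0 = μ₂ < μ₁
      rw [← h0] at hμ₁pos ⊢
      rw [hg0 x, hg μ₁ hμ₁pos x, hM]
      obtain ⟨hs1, hs2⟩ := sandwich μ₁ hμ₁pos
      constructor
      · linarith
      · linarith
  · -- 0 < μ₂
    have hμ₁pos : 0 < μ₁ := lt_of_lt_of_le hμ₂pos h12
    rw [hg μ₁ hμ₁pos x, hg μ₂ hμ₂pos x]
    obtain ⟨hc1, hc2⟩ := core μ₁ μ₂ hμ₂pos h12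
    constructor
    · linarith
    · nlinarith [hc1]
end

section
/- Let h: ℝ^m → ℝ be convex and differentiable with L-Lipschitz continuous gradient, S ⊆ ℝ^m closed convex, x* ∈ S, and a > 0 with a² − a ≥ 0, a² − a = b² for some b ≥ 0. Given points x, z ∈ S, define y = (1 − 1/a) x + (1/a) z, z⁺ = Π_S(z − (a/L) ∇h(y)), and x⁺ = (1 − 1/a) x + (1/a) z⁺. Then a² (h(x⁺) − h(x*)) + (L/2)‖z⁺ − x*‖² ≤ b² (h(x) − h(x*)) + (L/2)‖z − x*‖². -/
/-!
The descent lemma at `y` bounds `h xp` by the linear model of `h` at `y` plus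
`L/2 ‖xp - y‖²`. Since `a (xp - y) = zp - z = (a - 1)(x - y) + (xstar - y) + (zp - xstar)`,
after scaling by `a²` the linear part splits into the gradient inequalities of `h` at `y`
towards `x` (weight `a² - a = b²`) and towards `xstar` (weight `a`), plus a term
`a ⟪∇h y, zp - xstar⟫`. The variational inequality of the projection at `xstar` bounds this
term by `L ⟪z - zp, zp - xstar⟫`, and the three-point identity
`‖z - xstar‖² = ‖z - zp‖² + 2 ⟪z - zp, zp - xstar⟫ + ‖zp - xstar‖²` absorbs the rest.
-/

open Set InnerProductSpace

variable {F : Type*} [NormedAddCommGroup F] [InnerProductSpace ℝ F]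

theorem inner_sub_sub_nonpos_of_forall_norm_sub_le {S : Set F} (hS : Convex ℝ S) {u v : F}
    (hv : v ∈ S) (hmin : ∀ w ∈ S, ‖v - u‖ ≤ ‖w - u‖) {w : F} (hw : w ∈ S) :
    ⟪u - v, w - v⟫_ℝ ≤ 0 := by
  have : Nonempty S := ⟨⟨v, hv⟩⟩
  refine (norm_eq_iInf_iff_real_inner_le_zero hS hv).mp (le_antisymm ?_ ?_) w hw
  · exact le_ciInf fun w => by simpa only [norm_sub_rev u] using hmin w w.2
  · exact ciInf_le ⟨0, forall_mem_range.2 fun _ => norm_nonneg _⟩ (⟨v, hv⟩ : S)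

section Gradient

variable [CompleteSpace F]

theorem hasDerivAt_comp_add_smul {f : F → ℝ} {p d : F} {t : ℝ}
    (hf : DifferentiableAt ℝ f (p + t • d)) :
    HasDerivAt (fun s : ℝ => f (p + s • d)) ⟪gradient f (p + t • d), d⟫_ℝ t := by
  have hline : HasDerivAt (fun s : ℝ => p + s • d) d t := by
    simpa using ((hasDerivAt_id t).smul_const d).const_add p
  rw [inner_gradient_left]
  exact hf.hasFDerivAt.comp_hasDerivAt t hline

theorem ConvexOn.add_inner_gradient_le {S : Set F} {f : F → ℝ} (hf : ConvexOn ℝ S f) {p w : F}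
    (hp : p ∈ S) (hw : w ∈ S) (hdiff : DifferentiableAt ℝ f p) :
    f p + ⟪gradient f p, w - p⟫_ℝ ≤ f w := by
  have hline : ConvexOn ℝ (Icc 0 1) fun s : ℝ => f (p + s • (w - p)) := by
    refine (hf.comp_affineMap (AffineMap.lineMap p w)).subset
      (fun s hs => hf.1.lineMap_mem hp hw hs) (convex_Icc 0 1) |>.congr fun s _ => ?_
    simp [AffineMap.lineMap_apply, add_comm]
  have hderiv : HasDerivAt (fun s : ℝ => f (p + s • (w - p))) ⟪gradient f p, w - p⟫_ℝ 0 := by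
    simpa only [zero_smul, add_zero] using
      hasDerivAt_comp_add_smul (t := 0) (d := w - p) (by simpa using hdiff)
  have hslope := hline.le_slope_of_hasDerivAt (left_mem_Icc.2 zero_le_one)
    (right_mem_Icc.2 zero_le_one) zero_lt_one hderiv
  rw [slope_def_field] at hslope
  simp only [zero_smul, add_zero, one_smul, add_sub_cancel, sub_zero, div_one] at hslope
  linarith

theorem LipschitzWith.apply_le_add_inner_gradient_add_sq {f : F → ℝ} {L : NNReal}
    (hlip : LipschitzWith L (gradient f)) (hdiff : Differentiable ℝ f) (p q : F) :
    f q ≤ f p + ⟪gradient f p, q - p⟫_ℝ + L / 2 * ‖q - p‖ ^ 2 := by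
  set d := q - p
  set gap : ℝ → ℝ := fun t =>
    f (p + t • d) - (t * ⟪gradient f p, d⟫_ℝ + L / 2 * t ^ 2 * ‖d‖ ^ 2)
  have hgap : ∀ t, HasDerivAt gap
      (⟪gradient f (p + t • d), d⟫_ℝ - (⟪gradient f p, d⟫_ℝ + L * t * ‖d‖ ^ 2)) t := fun t => by
    refine (hasDerivAt_comp_add_smul (hdiff _)).sub (HasDerivAt.add ?_ ?_)
    · simpa using (hasDerivAt_id t).mul_const ⟪gradient f p, d⟫_ℝ
    · exact (((hasDerivAt_pow 2 t).const_mul ((L : ℝ) / 2)).mul_const (‖d‖ ^ 2)).congr_deriv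
        (by rw [Nat.cast_ofNat, pow_one]; ring)
  have hlip_dir :
      ∀ t, 0 ≤ t → ⟪gradient f (p + t • d) - gradient f p, d⟫_ℝ ≤ L * t * ‖d‖ ^ 2 :=
    fun t ht => calc
      _ ≤ ‖gradient f (p + t • d) - gradient f p‖ * ‖d‖ := real_inner_le_norm _ _
      _ ≤ L * ‖(p + t • d) - p‖ * ‖d‖ := by
        gcongr
        simpa only [dist_eq_norm] using hlip.dist_le_mul (p + t • d) p
      _ = L * t * ‖d‖ ^ 2 := by
        rw [add_sub_cancel_left, norm_smul, Real.norm_of_nonneg ht]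
        ring
  have hanti : AntitoneOn gap (Ici 0) := by
    refine antitoneOn_of_hasDerivWithinAt_nonpos (convex_Ici 0)
      (fun t _ => (hgap t).continuousAt.continuousWithinAt)
      (fun t _ => (hgap t).hasDerivWithinAt) fun t ht => ?_
    have := hlip_dir t (interior_subset ht)
    rw [inner_sub_left] at this
    linarith
  have := hanti self_mem_Ici (show (0 : ℝ) ≤ 1 from zero_le_one) zero_le_one
  simp only [gap, zero_smul, add_zero, one_smul, zero_mul, one_pow, mul_one, d,
    add_sub_cancel] at this
  linarith

end Gradient

theorem accelerated_step_lyapunov_le {f : F → ℝ} {g x z y zp xp xstar : F} {a L : ℝ}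
    (ha : 1 ≤ a) (hL : 0 < L)
    (hy : y = (1 - 1 / a) • x + (1 / a) • z) (hxp : xp = (1 - 1 / a) • x + (1 / a) • zp)
    (hdesc : f xp ≤ f y + ⟪g, xp - y⟫_ℝ + L / 2 * ‖xp - y‖ ^ 2)
    (hx : f y + ⟪g, x - y⟫_ℝ ≤ f x) (hstar : f y + ⟪g, xstar - y⟫_ℝ ≤ f xstar)
    (hproj : ⟪z - (a / L) • g - zp, xstar - zp⟫_ℝ ≤ 0) :
    a ^ 2 * (f xp - f xstar) + L / 2 * ‖zp - xstar‖ ^ 2 ≤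
      (a ^ 2 - a) * (f x - f xstar) + L / 2 * ‖z - xstar‖ ^ 2 := by
  have ha0 : a ≠ 0 := by positivity
  have hweight : 0 ≤ a ^ 2 - a := by nlinarith
  have hstep : zp - z = a • (xp - y) := by
    rw [hxp, hy]; match_scalars <;> simp [ha0]
  have hsplit : zp - z = (a - 1) • (x - y) + (xstar - y) + (zp - xstar) := by
    rw [hy]; match_scalars <;> field_simp <;> ring
  have hdesc' :
      a ^ 2 * f xp ≤ a ^ 2 * f y + a * ⟪g, zp - z⟫_ℝ + L / 2 * ‖zp - z‖ ^ 2 := by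
    rw [hstep, real_inner_smul_right, norm_smul, mul_pow, Real.norm_eq_abs, sq_abs]
    linear_combination a ^ 2 * hdesc
  have hproj' : a * ⟪g, zp - xstar⟫_ℝ ≤ L * ⟪z - zp, zp - xstar⟫_ℝ := by
    have : xstar - zp = -(zp - xstar) := (neg_sub _ _).symm
    rw [sub_right_comm, this, inner_neg_right, inner_sub_left, real_inner_smul_left] at hproj
    have := mul_le_mul_of_nonneg_left hproj hL.le
    field_simp at this
    linarith
  have hthree :
      ‖z - xstar‖ ^ 2 = ‖z - zp‖ ^ 2 + 2 * ⟪z - zp, zp - xstar⟫_ℝ + ‖zp - xstar‖ ^ 2 := by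
    rw [← norm_add_sq_real, sub_add_sub_cancel]
  have hinner :
      ⟪g, zp - z⟫_ℝ = (a - 1) * ⟪g, x - y⟫_ℝ + ⟪g, xstar - y⟫_ℝ + ⟪g, zp - xstar⟫_ℝ := by
    rw [hsplit, inner_add_right, inner_add_right, real_inner_smul_right]
  rw [norm_sub_rev z zp] at hthree
  linear_combination hdesc' + a * hinner + (a ^ 2 - a) * hx + a * hstar + hproj' - L / 2 * hthree

theorem stmt_13_general (m : ℕ) (S : Set (EuclideanSpace ℝ (Fin m)))
    (hScv : Convex ℝ S)
    (h : EuclideanSpace ℝ (Fin m) → ℝ)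
    (hconv : ConvexOn ℝ Set.univ h)
    (hdiff : Differentiable ℝ h)
    (L : NNReal) (hL : 0 < (L : ℝ))
    (hlip : LipschitzWith L (gradient h))
    (xstar : EuclideanSpace ℝ (Fin m)) (hxstar : xstar ∈ S)
    (a b : ℝ) (ha : 0 < a) (hab : a ^ 2 - a = b ^ 2)
    (x z y zp xp : EuclideanSpace ℝ (Fin m))
    (hy : y = (1 - 1 / a) • x + (1 / a) • z)
    (hzpS : zp ∈ S)
    (hproj : ∀ w ∈ S, ‖zp - (z - (a / L) • gradient h y)‖ ≤ ‖w - (z - (a / L) • gradient h y)‖)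
    (hxp : xp = (1 - 1 / a) • x + (1 / a) • zp) :
    a ^ 2 * (h xp - h xstar) + (L / 2) * ‖zp - xstar‖ ^ 2 ≤
      b ^ 2 * (h x - h xstar) + (L / 2) * ‖z - xstar‖ ^ 2 := by
  have ha1 : 1 ≤ a := by nlinarith [sq_nonneg b]
  rw [← hab]
  exact accelerated_step_lyapunov_le ha1 hL hy hxp
    (hlip.apply_le_add_inner_gradient_add_sq hdiff y xp)
    (hconv.add_inner_gradient_le trivial trivial (hdiff y))
    (hconv.add_inner_gradient_le trivial trivial (hdiff y))
    (inner_sub_sub_nonpos_of_forall_norm_sub_le hScv hzpS hproj hxstar)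

theorem stmt_13 (m : ℕ) (S : Set (EuclideanSpace ℝ (Fin m)))
    (hS : S.Nonempty) (hSc : IsClosed S) (hScv : Convex ℝ S)
    (h : EuclideanSpace ℝ (Fin m) → ℝ)
    (hconv : ConvexOn ℝ Set.univ h)
    (hdiff : Differentiable ℝ h)
    (L : NNReal) (hL : 0 < (L : ℝ))
    (hlip : LipschitzWith L (gradient h))
    (xstar : EuclideanSpace ℝ (Fin m)) (hxstar : xstar ∈ S)
    (a b : ℝ) (ha : 0 < a) (hb : 0 ≤ b) (hab : a ^ 2 - a = b ^ 2)
    (x z y zp xp : EuclideanSpace ℝ (Fin m))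
    (hx : x ∈ S) (hz : z ∈ S)
    (hy : y = (1 - 1 / a) • x + (1 / a) • z)
    (hzpS : zp ∈ S)
    (hproj : ∀ w ∈ S, ‖zp - (z - (a / L) • gradient h y)‖ ≤ ‖w - (z - (a / L) • gradient h y)‖)
    (hxp : xp = (1 - 1 / a) • x + (1 / a) • zp) :
    a ^ 2 * (h xp - h xstar) + (L / 2) * ‖zp - xstar‖ ^ 2 ≤
      b ^ 2 * (h x - h xstar) + (L / 2) * ‖z - xstar‖ ^ 2 :=
  stmt_13_general m S hScv h hconv hdiff L hL hlip xstar hxstar a b ha hab x z y zp xp hy hzpS hproj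
    hxp
end

section
/- Under Assumption 1 (f convex on closed convex S with minimizer x*, smooth approximations f_μ convex with (L' + L/μ)-Lipschitz gradient and 0 ≤ f_{μ₂} − f_{μ₁} ≤ β(μ₁ − μ₂)), the Lyapunov function E_k = (a_k²/L_k)(f_k(x^k) − f_k(x*) + β μ_k) + (1/2)‖z^k − x*‖² of the smoothing accelerated projected gradient method with μ_k = μ_0/(k+1), L_k = L' + L/μ_k satisfies E_{k+1} ≤ E_k + β a_{k+1} μ_k / L_k for all k ≥ 0. -/
/-!
For the fixed parameter `μ_k`, one iteration is an accelerated projected gradient step on the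
convex, `L_k`-smooth function `f_k`. The descent lemma at `y^k`, the gradient inequality of `f_k`
at `x^k` and at `x*`, and the three-point property of the projection give the classical estimate
  `(a_{k+1}² / L_k) (f_k(x^{k+1}) - f_k(x*)) + ½‖z^{k+1} - x*‖²`
  `  ≤ (a_k² / L_k) (f_k(x^k) - f_k(x*)) + ½‖z^k - x*‖²`,
the weights matching because `a_{k+1}² - a_{k+1} = a_k²`. By the sandwich inequality,
`f_μ(x) - f_μ(x*) + βμ` is nonnegative and nondecreasing in `μ`; since also `L_{k+1} ≥ L_k`,
replacing `μ_{k+1}` by `μ_k` in the first term of `E_{k+1}` only increases it, and the price of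
the `βμ_k` terms is `(a_{k+1}² - a_k²) βμ_k / L_k = β a_{k+1} μ_k / L_k`.
-/

open scoped RealInnerProductSpace NNReal
open Set AffineMap

section Projection

variable {F : Type*} [NormedAddCommGroup F] [InnerProductSpace ℝ F]

theorem Convex.inner_sub_sub_nonpos_of_forall_norm_sub_le {s : Set F} (hs : Convex ℝ s)
    {p v : F} (hv : v ∈ s) (hmin : ∀ w ∈ s, ‖v - p‖ ≤ ‖w - p‖) :
    ∀ w ∈ s, ⟪p - v, w - v⟫ ≤ 0 := by
  have : Nonempty s := ⟨⟨v, hv⟩⟩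
  refine (norm_eq_iInf_iff_real_inner_le_zero hs hv).mp (le_antisymm ?_ ?_)
  · exact le_ciInf fun w => by simpa only [norm_sub_rev p] using hmin w w.2
  · exact ciInf_le ⟨0, by rintro _ ⟨w, rfl⟩; exact norm_nonneg _⟩ (⟨v, hv⟩ : s)

theorem Convex.mul_inner_sub_le_of_forall_norm_sub_le {s : Set F} (hs : Convex ℝ s)
    {z z' d u : F} {η : ℝ} (hz' : z' ∈ s) (hu : u ∈ s)
    (hproj : ∀ w ∈ s, ‖z' - (z - η • d)‖ ≤ ‖w - (z - η • d)‖) :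
    η * ⟪d, z' - u⟫ ≤ (‖z - u‖ ^ 2 - ‖z' - u‖ ^ 2 - ‖z' - z‖ ^ 2) / 2 := by
  have hvi := hs.inner_sub_sub_nonpos_of_forall_norm_sub_le hz' hproj u hu
  have hsplit : ‖z - u‖ ^ 2 = ‖z' - z‖ ^ 2 - 2 * ⟪z' - z, z' - u⟫ + ‖z' - u‖ ^ 2 := by
    rw [show z - u = (z' - u) - (z' - z) by abel, norm_sub_sq_real, real_inner_comm]; ring
  rw [show z - η • d - z' = -((z' - z) + η • d) by abel, show u - z' = -(z' - u) by abel,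
    inner_neg_neg, inner_add_left, real_inner_smul_left] at hvi
  linarith

end Projection

section Smooth

variable {F : Type*} [NormedAddCommGroup F] [InnerProductSpace ℝ F] [CompleteSpace F]

theorem DifferentiableAt.hasDerivAt_comp_lineMap {f : F → ℝ} {p q : F} {t : ℝ}
    (h : DifferentiableAt ℝ f (lineMap p q t)) :
    HasDerivAt (fun s : ℝ => f (lineMap p q s)) ⟪gradient f (lineMap p q t), q - p⟫ t := by
  have := h.hasGradientAt.hasFDerivAt.comp_hasDerivAt t hasDerivAt_lineMap
  rwa [InnerProductSpace.toDual_apply_apply] at this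

theorem ConvexOn.add_inner_gradient_le_s14 {s : Set F} {f : F → ℝ} (hf : ConvexOn ℝ s f)
    {x y : F} (hx : x ∈ s) (hy : y ∈ s) (hd : DifferentiableAt ℝ f y) :
    f y + ⟪gradient f y, x - y⟫ ≤ f x := by
  have hline := (hf.comp_affineMap (lineMap y x)).le_slope_of_hasDerivAt
    (by simpa using hy) (by simpa using hx) zero_lt_one
    (DifferentiableAt.hasDerivAt_comp_lineMap (p := y) (q := x) (t := 0) (by simpa using hd))
  rw [slope_def_field] at hline
  simp only [Function.comp_apply, lineMap_apply_zero, lineMap_apply_one, sub_zero,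
    div_one] at hline
  linarith

theorem LipschitzOnWith.le_add_inner_gradient_add_norm_sq {s : Set F} (hs : Convex ℝ s)
    {f : F → ℝ} {C : ℝ≥0} (hd : ∀ w ∈ s, DifferentiableAt ℝ f w)
    (hlip : LipschitzOnWith C (gradient f) s) {x y : F} (hx : x ∈ s) (hy : y ∈ s) :
    f x ≤ f y + ⟪gradient f y, x - y⟫ + C / 2 * ‖x - y‖ ^ 2 := by
  have hmem : ∀ t ∈ Icc (0 : ℝ) 1, lineMap y x t ∈ s := fun t ht => hs.lineMap_mem hy hx ht
  set φ : ℝ → ℝ := fun t =>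
    f (lineMap y x t) - t * ⟪gradient f y, x - y⟫ - C / 2 * t ^ 2 * ‖x - y‖ ^ 2
  have hφ' : ∀ t ∈ Icc (0 : ℝ) 1, HasDerivAt φ
      (⟪gradient f (lineMap y x t), x - y⟫ - ⟪gradient f y, x - y⟫ - C * t * ‖x - y‖ ^ 2) t := by
    intro t ht
    have := (((hd _ (hmem t ht)).hasDerivAt_comp_lineMap).sub
      ((hasDerivAt_id t).mul_const ⟪gradient f y, x - y⟫)).sub
      (((hasDerivAt_pow 2 t).const_mul (C / 2 : ℝ)).mul_const (‖x - y‖ ^ 2))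
    exact this.congr_deriv (by push_cast; ring)
  have hφ'_nonpos : ∀ t ∈ Icc (0 : ℝ) 1,
      ⟪gradient f (lineMap y x t), x - y⟫ - ⟪gradient f y, x - y⟫ - C * t * ‖x - y‖ ^ 2 ≤ 0 := by
    intro t ht
    have hgrad : ‖gradient f (lineMap y x t) - gradient f y‖ ≤ C * (t * ‖x - y‖) := by
      have := hlip.norm_sub_le (hmem t ht) hy
      rwa [lineMap_apply_module', add_sub_cancel_right, norm_smul,
        Real.norm_of_nonneg ht.1] at this
    have := real_inner_le_norm (gradient f (lineMap y x t) - gradient f y) (x - y)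
    rw [inner_sub_left] at this
    linarith [mul_le_mul_of_nonneg_right hgrad (norm_nonneg (x - y))]
  have hanti : AntitoneOn φ (Icc 0 1) :=
    antitoneOn_of_hasDerivWithinAt_nonpos (convex_Icc 0 1)
      (fun t ht => (hφ' t ht).continuousAt.continuousWithinAt)
      (fun t ht => (hφ' t (interior_subset ht)).hasDerivWithinAt)
      (fun t ht => hφ'_nonpos t (interior_subset ht))
  have := hanti (left_mem_Icc.2 zero_le_one) (right_mem_Icc.2 zero_le_one) zero_le_one
  simp only [φ, lineMap_apply_zero, lineMap_apply_one] at this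
  linarith

theorem ConvexOn.apply_accelerated_step_le {s : Set F} (hs : Convex ℝ s) {g : F → ℝ}
    {C : ℝ≥0} (hg : ConvexOn ℝ s g) (hgd : ∀ w ∈ s, DifferentiableAt ℝ g w)
    (hgl : LipschitzOnWith C (gradient g) s) {θ : ℝ} (hθ₀ : 0 ≤ θ) (hθ₁ : θ ≤ 1)
    {x z z' u y x' : F} (hx : x ∈ s) (hz : z ∈ s) (hz' : z' ∈ s) (hu : u ∈ s)
    (hy : y = (1 - θ) • x + θ • z) (hx' : x' = (1 - θ) • x + θ • z') :
    g x' ≤ (1 - θ) * g x + θ * (g u + ⟪gradient g y, z' - u⟫)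
      + C / 2 * θ ^ 2 * ‖z' - z‖ ^ 2 := by
  have hyS : y ∈ s := hy ▸ hs hx hz (by linarith) hθ₀ (by ring)
  have hx'S : x' ∈ s := hx' ▸ hs hx hz' (by linarith) hθ₀ (by ring)
  have hdescent := hgl.le_add_inner_gradient_add_norm_sq hs hgd hx'S hyS
  have hx_grad := hg.add_inner_gradient_le_s14 hx hyS (hgd y hyS)
  have hu_grad := hg.add_inner_gradient_le_s14 hu hyS (hgd y hyS)
  have hstep : x' - y = θ • (z' - z) := by rw [hx', hy]; module
  have hsplit : x' - y = (1 - θ) • (x - y) + θ • (u - y) + θ • (z' - u) := by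
    rw [hx', hy]; module
  have hinner : ⟪gradient g y, x' - y⟫ = (1 - θ) * ⟪gradient g y, x - y⟫
      + θ * ⟪gradient g y, u - y⟫ + θ * ⟪gradient g y, z' - u⟫ := by
    simp only [hsplit, inner_add_right, real_inner_smul_right]
  rw [hinner, hstep, norm_smul, Real.norm_of_nonneg hθ₀] at hdescent
  linarith [mul_le_mul_of_nonneg_left hx_grad (sub_nonneg.2 hθ₁),
    mul_le_mul_of_nonneg_left hu_grad hθ₀]

theorem ConvexOn.lyapunov_accelerated_step_le {s : Set F} (hs : Convex ℝ s) {g : F → ℝ}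
    {C : ℝ} (hC : 0 < C) (hg : ConvexOn ℝ s g) (hgd : ∀ w ∈ s, DifferentiableAt ℝ g w)
    (hgl : LipschitzOnWith (Real.toNNReal C) (gradient g) s) {A b : ℝ} (hA : 1 ≤ A)
    (hAb : A ^ 2 - A = b ^ 2) {x z z' u y x' : F} (hx : x ∈ s) (hz : z ∈ s) (hz' : z' ∈ s)
    (hu : u ∈ s) (hy : y = (1 - 1 / A) • x + (1 / A) • z)
    (hx' : x' = (1 - 1 / A) • x + (1 / A) • z')
    (hproj : ∀ w ∈ s,
      ‖z' - (z - (A / C) • gradient g y)‖ ≤ ‖w - (z - (A / C) • gradient g y)‖) :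
    A ^ 2 / C * (g x' - g u) + 1 / 2 * ‖z' - u‖ ^ 2
      ≤ b ^ 2 / C * (g x - g u) + 1 / 2 * ‖z - u‖ ^ 2 := by
  have hA₀ : 0 < A := by linarith
  have hstep := hg.apply_accelerated_step_le hs hgd hgl (by positivity)
    ((div_le_one hA₀).2 hA) hx hz hz' hu hy hx'
  rw [Real.coe_toNNReal _ hC.le] at hstep
  have hthree_point := hs.mul_inner_sub_le_of_forall_norm_sub_le hz' hu hproj
  have hscaled := mul_le_mul_of_nonneg_left hstep (by positivity : 0 ≤ A ^ 2 / C)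
  have hweights : A ^ 2 / C * ((1 - 1 / A) * g x + 1 / A * (g u + ⟪gradient g y, z' - u⟫)
      + C / 2 * (1 / A) ^ 2 * ‖z' - z‖ ^ 2) - A ^ 2 / C * g u
      = b ^ 2 / C * (g x - g u) + A / C * ⟪gradient g y, z' - u⟫ + 1 / 2 * ‖z' - z‖ ^ 2 := by
    rw [← hAb]; field_simp; ring
  linarith

end Smooth

theorem Convex.one_sub_one_div_smul_add_mem {E : Type*} [AddCommGroup E] [Module ℝ E]
    {s : Set E} (hs : Convex ℝ s) {x y : E} (hx : x ∈ s) (hy : y ∈ s) {A : ℝ} (hA : 1 ≤ A) :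
    (1 - 1 / A) • x + (1 / A) • y ∈ s :=
  hs hx hy (sub_nonneg.2 (div_le_one_of_le₀ hA (by linarith))) (by positivity) (by ring)

theorem one_le_one_add_sqrt_div_two (b : ℝ) : 1 ≤ (1 + √(4 * b ^ 2 + 1)) / 2 := by
  have : 1 ≤ √(4 * b ^ 2 + 1) := Real.one_le_sqrt.2 (by nlinarith [sq_nonneg b])
  linarith

theorem one_add_sqrt_div_two_sq_sub_self (b : ℝ) :
    ((1 + √(4 * b ^ 2 + 1)) / 2) ^ 2 - (1 + √(4 * b ^ 2 + 1)) / 2 = b ^ 2 := by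
  linear_combination (1 / 4 : ℝ) * Real.sq_sqrt (by positivity : 0 ≤ 4 * b ^ 2 + 1)

theorem sub_add_mul_le_of_sandwich {α : Type*} {f : ℝ → α → ℝ} {S : Set α} {β : ℝ}
    (hsandwich : ∀ w ∈ S, ∀ μ₁ μ₂ : ℝ, 0 ≤ μ₂ → μ₂ ≤ μ₁ →
      0 ≤ f μ₂ w - f μ₁ w ∧ f μ₂ w - f μ₁ w ≤ β * (μ₁ - μ₂))
    {u v : α} (hu : u ∈ S) (hv : v ∈ S) {μ₁ μ₂ : ℝ} (hμ₂ : 0 ≤ μ₂) (hμ : μ₂ ≤ μ₁) :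
    f μ₂ u - f μ₂ v + β * μ₂ ≤ f μ₁ u - f μ₁ v + β * μ₁ := by
  linarith [(hsandwich u hu μ₁ μ₂ hμ₂ hμ).2, (hsandwich v hv μ₁ μ₂ hμ₂ hμ).1]

theorem sub_add_mul_nonneg_of_sandwich {α : Type*} {f : ℝ → α → ℝ} {S : Set α} {β : ℝ}
    (hsandwich : ∀ w ∈ S, ∀ μ₁ μ₂ : ℝ, 0 ≤ μ₂ → μ₂ ≤ μ₁ →
      0 ≤ f μ₂ w - f μ₁ w ∧ f μ₂ w - f μ₁ w ≤ β * (μ₁ - μ₂))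
    {u v : α} (hu : u ∈ S) (hv : v ∈ S) (hmin : f 0 v ≤ f 0 u) {μ : ℝ} (hμ : 0 ≤ μ) :
    0 ≤ f μ u - f μ v + β * μ := by
  linarith [(hsandwich u hu μ 0 le_rfl hμ).2, (hsandwich v hv μ 0 le_rfl hμ).1]

theorem stmt_14_general (m : ℕ) (S : Set (EuclideanSpace ℝ (Fin m)))
    (hScv : Convex ℝ S)
    (f : ℝ → EuclideanSpace ℝ (Fin m) → ℝ)
    (β μ0 L L' : ℝ) (hμ0 : 0 < μ0) (hL : 0 < L) (hL' : 0 ≤ L')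
    -- Assumption 1: convexity, differentiability, Lipschitz gradient, sandwich
    (hconv : ∀ μ : ℝ, 0 < μ → ConvexOn ℝ S (f μ))
    (hdiff : ∀ μ : ℝ, 0 < μ → ∀ w ∈ S, DifferentiableAt ℝ (f μ) w)
    (hlip : ∀ μ : ℝ, 0 < μ →
      LipschitzOnWith (Real.toNNReal (L' + L / μ)) (gradient (f μ)) S)
    (hsandwich : ∀ w ∈ S, ∀ μ₁ μ₂ : ℝ, 0 ≤ μ₂ → μ₂ ≤ μ₁ →
      0 ≤ f μ₂ w - f μ₁ w ∧ f μ₂ w - f μ₁ w ≤ β * (μ₁ - μ₂))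
    (xstar : EuclideanSpace ℝ (Fin m)) (hxstarS : xstar ∈ S)
    (hmin : ∀ w ∈ S, f 0 xstar ≤ f 0 w)
    -- Algorithm 1 (S-APG)
    (μ : ℕ → ℝ) (hμ : ∀ k : ℕ, μ k = μ0 / (k + 1))
    (Lk : ℕ → ℝ) (hLk : ∀ k : ℕ, Lk k = L' + L / μ k)
    (a : ℕ → ℝ)
    (harec : ∀ k : ℕ, a (k + 1) = (1 + Real.sqrt (4 * (a k) ^ 2 + 1)) / 2)
    (x y z : ℕ → EuclideanSpace ℝ (Fin m))
    (hx0 : x 0 = z 0) (hx0S : x 0 ∈ S)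
    (hy : ∀ k : ℕ, y k = (1 - 1 / a (k + 1)) • x k + (1 / a (k + 1)) • z k)
    (hzS : ∀ k : ℕ, z (k + 1) ∈ S)
    (hproj : ∀ k : ℕ, ∀ w ∈ S,
      ‖z (k + 1) - (z k - (a (k + 1) / Lk k) • gradient (f (μ k)) (y k))‖ ≤
        ‖w - (z k - (a (k + 1) / Lk k) • gradient (f (μ k)) (y k))‖)
    (hxrec : ∀ k : ℕ, x (k + 1) = (1 - 1 / a (k + 1)) • x k + (1 / a (k + 1)) • z (k + 1))
    -- Lyapunov function
    (E : ℕ → ℝ)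
    (hE : ∀ k : ℕ, E k = ((a k) ^ 2 / Lk k) * (f (μ k) (x k) - f (μ k) xstar + β * μ k)
      + (1 / 2) * ‖z k - xstar‖ ^ 2) :
    ∀ k : ℕ, E (k + 1) ≤ E k + β * a (k + 1) * μ k / Lk k := by
  intro k
  have hμ_pos (n : ℕ) : 0 < μ n := by rw [hμ n]; positivity
  have hL_pos : 0 < Lk k := by rw [hLk]; have := hμ_pos k; positivity
  have hμ_succ : μ (k + 1) ≤ μ k := by rw [hμ, hμ]; gcongr; linarith
  have hL_succ : Lk k ≤ Lk (k + 1) := by rw [hLk, hLk]; have := hμ_pos (k + 1); gcongr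
  have ha_one (n : ℕ) : 1 ≤ a (n + 1) := harec n ▸ one_le_one_add_sqrt_div_two (a n)
  have ha_sq : a (k + 1) ^ 2 - a (k + 1) = a k ^ 2 :=
    harec k ▸ one_add_sqrt_div_two_sq_sub_self (a k)
  have hxS (n : ℕ) : x n ∈ S := by
    induction n with
    | zero => exact hx0S
    | succ n ih => exact hxrec n ▸ hScv.one_sub_one_div_smul_add_mem ih (hzS n) (ha_one n)
  have hzS_k : z k ∈ S := k.casesOn (hx0 ▸ hx0S) hzS
  have hstep := (hconv _ (hμ_pos k)).lyapunov_accelerated_step_le hScv hL_pos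
    (hdiff _ (hμ_pos k)) (by rw [hLk]; exact hlip _ (hμ_pos k)) (ha_one k) ha_sq (hxS k) hzS_k
    (hzS k) hxstarS (hy k) (hxrec k) (hproj k)
  have hgap := sub_add_mul_le_of_sandwich hsandwich (hxS (k + 1)) hxstarS
    (hμ_pos (k + 1)).le hμ_succ
  have hgap_nonneg := sub_add_mul_nonneg_of_sandwich hsandwich (hxS (k + 1)) hxstarS
    (hmin _ (hxS (k + 1))) (hμ_pos (k + 1)).le
  have hweight : a (k + 1) ^ 2 / Lk k * (β * μ k)
      = a k ^ 2 / Lk k * (β * μ k) + β * a (k + 1) * μ k / Lk k := by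
    rw [← ha_sq]; ring
  rw [hE, hE]
  calc _ ≤ a (k + 1) ^ 2 / Lk k * (f (μ k) (x (k + 1)) - f (μ k) xstar + β * μ k)
          + 1 / 2 * ‖z (k + 1) - xstar‖ ^ 2 := by
        gcongr
    _ ≤ _ := by linarith

theorem stmt_14 (m : ℕ) (S : Set (EuclideanSpace ℝ (Fin m)))
    (hS : S.Nonempty) (hSc : IsClosed S) (hScv : Convex ℝ S)
    (f : ℝ → EuclideanSpace ℝ (Fin m) → ℝ)
    (β μ0 L L' : ℝ) (hβ : 0 < β) (hμ0 : 0 < μ0) (hL : 0 < L) (hL' : 0 ≤ L')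
    -- Assumption 1: convexity, differentiability, Lipschitz gradient, sandwich
    (hconv : ∀ μ : ℝ, 0 < μ → ConvexOn ℝ S (f μ))
    (hdiff : ∀ μ : ℝ, 0 < μ → ∀ w ∈ S, DifferentiableAt ℝ (f μ) w)
    (hlip : ∀ μ : ℝ, 0 < μ →
      LipschitzOnWith (Real.toNNReal (L' + L / μ)) (gradient (f μ)) S)
    (hsandwich : ∀ w ∈ S, ∀ μ₁ μ₂ : ℝ, 0 ≤ μ₂ → μ₂ ≤ μ₁ →
      0 ≤ f μ₂ w - f μ₁ w ∧ f μ₂ w - f μ₁ w ≤ β * (μ₁ - μ₂))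
    (xstar : EuclideanSpace ℝ (Fin m)) (hxstarS : xstar ∈ S)
    (hmin : ∀ w ∈ S, f 0 xstar ≤ f 0 w)
    -- Algorithm 1 (S-APG)
    (μ : ℕ → ℝ) (hμ : ∀ k : ℕ, μ k = μ0 / (k + 1))
    (Lk : ℕ → ℝ) (hLk : ∀ k : ℕ, Lk k = L' + L / μ k)
    (a : ℕ → ℝ) (ha0 : a 0 = 0)
    (harec : ∀ k : ℕ, a (k + 1) = (1 + Real.sqrt (4 * (a k) ^ 2 + 1)) / 2)
    (x y z : ℕ → EuclideanSpace ℝ (Fin m))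
    (hx0 : x 0 = z 0) (hx0S : x 0 ∈ S)
    (hy : ∀ k : ℕ, y k = (1 - 1 / a (k + 1)) • x k + (1 / a (k + 1)) • z k)
    (hzS : ∀ k : ℕ, z (k + 1) ∈ S)
    (hproj : ∀ k : ℕ, ∀ w ∈ S,
      ‖z (k + 1) - (z k - (a (k + 1) / Lk k) • gradient (f (μ k)) (y k))‖ ≤
        ‖w - (z k - (a (k + 1) / Lk k) • gradient (f (μ k)) (y k))‖)
    (hxrec : ∀ k : ℕ, x (k + 1) = (1 - 1 / a (k + 1)) • x k + (1 / a (k + 1)) • z (k + 1))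
    -- Lyapunov function
    (E : ℕ → ℝ)
    (hE : ∀ k : ℕ, E k = ((a k) ^ 2 / Lk k) * (f (μ k) (x k) - f (μ k) xstar + β * μ k)
      + (1 / 2) * ‖z k - xstar‖ ^ 2) :
    ∀ k : ℕ, E (k + 1) ≤ E k + β * a (k + 1) * μ k / Lk k :=
  stmt_14_general m S hScv f β μ0 L L' hμ0 hL hL' hconv hdiff hlip hsandwich xstar hxstarS hmin μ hμ
    Lk hLk a harec x y z hx0 hx0S hy hzS hproj hxrec E hE
end

section
/- Under Assumption 1, the iterates of the smoothing accelerated projected gradient method (Algorithm 1) satisfy, for all k ≥ 2, f(x^k) − f(x*) ≤ (2L‖x^0 − x*‖² + 6βμ_0² log k)/(μ_0 k) + 2(L' + L/μ_0)(‖x^0 − x*‖² + (3βμ_0²/L) log k)/k²; in particular f(x^k) − f(x*) = O(k^{-1} log k). -/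
/-!
Each iteration of the accelerated projected gradient method, run on `f_μ` with step `1 / L_k`,
satisfies the classical energy inequality
`a_{k+1}² (f_μ(x^{k+1}) - f_μ(x*)) + L_k/2 ‖z^{k+1} - x*‖²
  ≤ a_k² (f_μ(x^k) - f_μ(x*)) + L_k/2 ‖z^k - x*‖²`,
obtained from convexity, the descent lemma and the variational inequality of the projection,
together with `a_{k+1}² - a_{k+1} = a_k²`. Passing from `μ_k` to `μ_{k+1}` costs
`a_{k+1}² β (μ_k - μ_{k+1})` by the sandwich inequality, and passing from `L_k` to
`L_{k+1} = L_k + L / μ_0` costs `L / (2 μ_0) ‖z^{k+1} - x*‖²`. Since `a_{k+1} ≈ k / 2`, both costs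
are `O(β μ_0)` per step and are paid for by the growth of `L_k (3 β μ_0² / L) log k / 2`, so the
energy stays below `L_k / 2 (‖x^0 - x*‖² + (3 β μ_0² / L) log (k + 1))`. Dividing by
`a_k² ≥ (k + 1)² / 4` and paying `β μ_k` to pass from `f_{μ_k}` back to `f` gives the rate.
-/

open AffineMap Set
open scoped RealInnerProductSpace

section Smooth

variable {E : Type*} [NormedAddCommGroup E] [InnerProductSpace ℝ E] [CompleteSpace E]
  {s : Set E} {F : E → ℝ} {v w : E}

theorem hasDerivAt_comp_lineMap {t : ℝ} (hd : DifferentiableAt ℝ F (lineMap v w t)) :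
    HasDerivAt (fun t ↦ F (lineMap v w t)) ⟪gradient F (lineMap v w t), w - v⟫ t := by
  rw [inner_gradient_left]
  exact hd.hasFDerivAt.comp_hasDerivAt t hasDerivAt_lineMap

theorem ConvexOn.add_inner_gradient_le_s17 (hF : ConvexOn ℝ s F) (hv : v ∈ s) (hw : w ∈ s)
    (hd : DifferentiableAt ℝ F v) : F v + ⟪gradient F v, w - v⟫ ≤ F w := by
  have hφ := (hF.comp_affineMap (lineMap v w)).le_slope_of_hasDerivAt
    (x := 0) (y := 1) (by simpa) (by simpa) zero_lt_one
    (hasDerivAt_comp_lineMap (by simpa using hd))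
  simp only [Function.comp_def, slope_def_field, lineMap_apply_zero, lineMap_apply_one] at hφ
  linarith

theorem LipschitzOnWith.le_add_inner_gradient_add_sq {C : NNReal} (hs : Convex ℝ s)
    (hlip : LipschitzOnWith C (gradient F) s) (hdiff : ∀ u ∈ s, DifferentiableAt ℝ F u)
    (hv : v ∈ s) (hw : w ∈ s) :
    F w ≤ F v + ⟪gradient F v, w - v⟫ + C / 2 * ‖w - v‖ ^ 2 := by
  set ψ : ℝ → ℝ := fun t ↦
    F (lineMap v w t) - t * ⟪gradient F v, w - v⟫ - C * t ^ 2 / 2 * ‖w - v‖ ^ 2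
  have hmem : ∀ t ∈ Icc (0 : ℝ) 1, lineMap v w t ∈ s := fun t ht ↦ hs.lineMap_mem hv hw ht
  have hψ : ∀ t ∈ Icc (0 : ℝ) 1, HasDerivAt ψ
      (⟪gradient F (lineMap v w t) - gradient F v, w - v⟫ - C * t * ‖w - v‖ ^ 2) t := by
    intro t ht
    have h := (((hasDerivAt_comp_lineMap (hdiff _ (hmem t ht))).sub
      ((hasDerivAt_id t).mul_const ⟪gradient F v, w - v⟫)).sub
      ((((hasDerivAt_pow 2 t).const_mul (C : ℝ)).div_const 2).mul_const (‖w - v‖ ^ 2)))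
    exact h.congr_deriv (by rw [inner_sub_left]; push_cast; ring)
  have hderiv_nonpos : ∀ t ∈ Icc (0 : ℝ) 1,
      ⟪gradient F (lineMap v w t) - gradient F v, w - v⟫ - C * t * ‖w - v‖ ^ 2 ≤ 0 := by
    intro t ht
    have hdist := hlip.dist_le_mul _ (hmem t ht) _ hv
    rw [dist_lineMap_left, Real.norm_of_nonneg ht.1, dist_eq_norm' v w, dist_eq_norm] at hdist
    nlinarith [real_inner_le_norm (gradient F (lineMap v w t) - gradient F v) (w - v),
      mul_le_mul_of_nonneg_right hdist (norm_nonneg (w - v))]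
  have hanti : AntitoneOn ψ (Icc 0 1) := by
    refine antitoneOn_of_deriv_nonpos (convex_Icc 0 1)
      (fun t ht ↦ (hψ t ht).continuousAt.continuousWithinAt)
      (fun t ht ↦ (hψ t (interior_subset ht)).differentiableAt.differentiableWithinAt)
      (fun t ht ↦ ?_)
    rw [(hψ t (interior_subset ht)).deriv]
    exact hderiv_nonpos t (interior_subset ht)
  have h := hanti (left_mem_Icc.2 zero_le_one) (right_mem_Icc.2 zero_le_one) zero_le_one
  simp only [ψ, lineMap_apply_zero, lineMap_apply_one] at h
  linarith

theorem ConvexOn.le_add_inner_gradient_add_sq {C : NNReal} (hs : Convex ℝ s)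
    (hF : ConvexOn ℝ s F) (hlip : LipschitzOnWith C (gradient F) s)
    (hdiff : ∀ u ∈ s, DifferentiableAt ℝ F u) {y u x' : E} (hy : y ∈ s) (hu : u ∈ s)
    (hx' : x' ∈ s) :
    F x' ≤ F u + ⟪gradient F y, x' - u⟫ + C / 2 * ‖x' - y‖ ^ 2 := by
  have hdescent := hlip.le_add_inner_gradient_add_sq hs hdiff hy hx'
  have hconv := hF.add_inner_gradient_le_s17 hy hu (hdiff y hy)
  have hsplit : ⟪gradient F y, x' - u⟫ = ⟪gradient F y, x' - y⟫ - ⟪gradient F y, u - y⟫ := by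
    rw [← inner_sub_right, sub_sub_sub_cancel_right]
  linarith

end Smooth

section Projection

variable {E : Type*} [NormedAddCommGroup E] [InnerProductSpace ℝ E] {s : Set E}

theorem inner_sub_le_zero_of_forall_norm_sub_le (hs : Convex ℝ s) {p q : E} (hp : p ∈ s)
    (hmin : ∀ w ∈ s, ‖p - q‖ ≤ ‖w - q‖) {u : E} (hu : u ∈ s) : ⟪q - p, u - p⟫ ≤ 0 := by
  have : Nonempty s := ⟨⟨p, hp⟩⟩
  refine (norm_eq_iInf_iff_real_inner_le_zero hs hp).1 (le_antisymm ?_ ?_) u hu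
  · exact le_ciInf fun w ↦ by simpa only [norm_sub_rev q] using hmin w w.2
  · exact ciInf_le ⟨0, by rintro _ ⟨w, rfl⟩; positivity⟩ (⟨p, hp⟩ : s)

theorem sq_norm_add_inner_le_of_forall_norm_sub_le (hs : Convex ℝ s) {p z g : E} {t : ℝ}
    (hp : p ∈ s) (hmin : ∀ w ∈ s, ‖p - (z - t • g)‖ ≤ ‖w - (z - t • g)‖) {u : E} (hu : u ∈ s) :
    2 * t * ⟪g, p - u⟫ + ‖p - z‖ ^ 2 + ‖p - u‖ ^ 2 ≤ ‖z - u‖ ^ 2 := by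
  have hvi := inner_sub_le_zero_of_forall_norm_sub_le hs hp hmin hu
  rw [show z - t • g - p = (z - p) - t • g by abel, inner_sub_left, real_inner_smul_left] at hvi
  rw [norm_sub_rev p z, show z - u = (z - p) - (u - p) by abel, norm_sub_sq_real (z - p),
    show p - u = -(u - p) by abel, inner_neg_right, norm_neg]
  linarith

end Projection

section AcceleratedStep

variable {E : Type*} [NormedAddCommGroup E] [InnerProductSpace ℝ E] [CompleteSpace E]
  {s : Set E} {F : E → ℝ}

theorem ConvexOn.accelerated_projected_gradient_step (hs : Convex ℝ s) (hF : ConvexOn ℝ s F)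
    (hdiff : ∀ u ∈ s, DifferentiableAt ℝ F u) {C : ℝ} (hC : 0 < C)
    (hlip : LipschitzOnWith C.toNNReal (gradient F) s) {A : ℝ} (hA : 1 ≤ A) {x z z' u : E}
    (hx : x ∈ s) (hz : z ∈ s) (hz' : z' ∈ s) (hu : u ∈ s)
    (hproj : ∀ w ∈ s, ‖z' - (z - (A / C) • gradient F ((1 - 1 / A) • x + (1 / A) • z))‖ ≤
      ‖w - (z - (A / C) • gradient F ((1 - 1 / A) • x + (1 / A) • z))‖) :
    A ^ 2 * (F ((1 - 1 / A) • x + (1 / A) • z') - F u) + C / 2 * ‖z' - u‖ ^ 2 ≤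
      (A ^ 2 - A) * (F x - F u) + C / 2 * ‖z - u‖ ^ 2 := by
  set y := (1 - 1 / A) • x + (1 / A) • z
  set x' := (1 - 1 / A) • x + (1 / A) • z'
  set g := gradient F y
  have hA0 : 0 < A := by linarith
  have hθ : 0 ≤ 1 - 1 / A := by rw [sub_nonneg, div_le_one hA0]; exact hA
  have hy : y ∈ s := hs hx hz hθ (by positivity) (by ring)
  have hx' : x' ∈ s := hs hx hz' hθ (by positivity) (by ring)
  have hu' := hF.le_add_inner_gradient_add_sq hs hlip hdiff hy hu hx'
  have hx'' := hF.le_add_inner_gradient_add_sq hs hlip hdiff hy hx hx'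
  rw [Real.coe_toNNReal C hC.le] at hu' hx''
  have hprox := sq_norm_add_inner_le_of_forall_norm_sub_le hs hz' hproj hu
  -- `A • x' = (A - 1) • x + z'` turns the two gradient terms into one, and `A • (x' - y) = z' - z`
  have hinner : A * ⟪g, x' - u⟫ + (A ^ 2 - A) * ⟪g, x' - x⟫ = A * ⟪g, z' - u⟫ := by
    rw [← real_inner_smul_right, ← real_inner_smul_right, ← inner_add_right,
      ← real_inner_smul_right]
    congr 1
    simp only [x']
    match_scalars <;> field_simp <;> ring
  have hnorm : A ^ 2 * ‖x' - y‖ ^ 2 = ‖z' - z‖ ^ 2 := by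
    rw [← mul_pow, ← Real.norm_of_nonneg hA0.le, ← norm_smul]
    congr 2
    simp only [x', y]
    match_scalars <;> field_simp
    ring
  have hAA : 0 ≤ A ^ 2 - A := by nlinarith
  have hprox' : A * ⟪g, z' - u⟫ + C / 2 * ‖z' - z‖ ^ 2 + C / 2 * ‖z' - u‖ ^ 2 ≤
      C / 2 * ‖z - u‖ ^ 2 := by
    have := mul_le_mul_of_nonneg_left hprox (by positivity : 0 ≤ C / 2)
    field_simp at this ⊢
    linarith
  nlinarith [mul_le_mul_of_nonneg_left hu' hA0.le, mul_le_mul_of_nonneg_left hx'' hAA]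

end AcceleratedStep

theorem accelerated_iterates_mem {E : Type*} [AddCommGroup E] [Module ℝ E] {S : Set E}
    (hS : Convex ℝ S) {a : ℕ → ℝ} (ha : ∀ k : ℕ, 1 ≤ a (k + 1)) {x z : ℕ → E}
    (hx0 : x 0 = z 0) (hx0S : x 0 ∈ S) (hzS : ∀ k : ℕ, z (k + 1) ∈ S)
    (hxrec : ∀ k : ℕ, x (k + 1) = (1 - 1 / a (k + 1)) • x k + (1 / a (k + 1)) • z (k + 1))
    (k : ℕ) : x k ∈ S ∧ z k ∈ S := by
  induction k with
  | zero => exact ⟨hx0S, hx0 ▸ hx0S⟩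
  | succ k ih =>
    have hθ : 1 / a (k + 1) ≤ 1 := by rw [div_le_one (by linarith [ha k])]; exact ha k
    refine ⟨?_, hzS k⟩
    rw [hxrec]
    exact hS ih.1 (hzS k) (by linarith) (one_div_nonneg.2 (by linarith [ha k])) (by ring)

section NesterovSequence

theorem one_le_nesterov (t : ℝ) : 1 ≤ (1 + √(4 * t ^ 2 + 1)) / 2 := by
  have : 1 ≤ √(4 * t ^ 2 + 1) := Real.one_le_sqrt.2 (by nlinarith)
  linarith

theorem nesterov_sq_sub_self (t : ℝ) :
    ((1 + √(4 * t ^ 2 + 1)) / 2) ^ 2 - (1 + √(4 * t ^ 2 + 1)) / 2 = t ^ 2 := by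
  linear_combination Real.sq_sqrt (by positivity : (0 : ℝ) ≤ 4 * t ^ 2 + 1) / 4

theorem add_half_le_nesterov (t : ℝ) : t + 1 / 2 ≤ (1 + √(4 * t ^ 2 + 1)) / 2 := by
  have : 2 * t ≤ √(4 * t ^ 2 + 1) := Real.le_sqrt_of_sq_le (by nlinarith)
  linarith

theorem nesterov_le_add {t : ℝ} (ht : 3 / 8 ≤ t) : (1 + √(4 * t ^ 2 + 1)) / 2 ≤ t + 3 / 4 := by
  have : √(4 * t ^ 2 + 1) ≤ 2 * t + 1 / 2 := (Real.sqrt_le_left (by linarith)).2 (by nlinarith)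
  linarith

variable {a : ℕ → ℝ}

theorem nesterov_seq_lower (ha0 : a 0 = 0)
    (harec : ∀ k : ℕ, a (k + 1) = (1 + √(4 * a k ^ 2 + 1)) / 2) (k : ℕ) :
    ((k : ℝ) + 2) / 2 ≤ a (k + 1) := by
  induction k with
  | zero => simp [harec, ha0]
  | succ k ih =>
    rw [harec (k + 1)]
    have := add_half_le_nesterov (a (k + 1))
    push_cast
    linarith

theorem nesterov_seq_upper (ha0 : a 0 = 0)
    (harec : ∀ k : ℕ, a (k + 1) = (1 + √(4 * a k ^ 2 + 1)) / 2) (k : ℕ) :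
    a (k + 1) ≤ (3 * k + 4) / 4 := by
  induction k with
  | zero => simp [harec, ha0]
  | succ k ih =>
    rw [harec (k + 1)]
    have := nesterov_le_add (t := a (k + 1)) (by linarith [nesterov_seq_lower ha0 harec k])
    push_cast
    linarith

end NesterovSequence

/-- The offset `1/6` absorbs the final smoothing error `β μ_k`; the value `0` at `n = 1` leaves the
first energy bound untouched, and `log 2 - 1/6 ≥ 1/2` still pays for the first step. -/
noncomputable def logPotential (n : ℕ) : ℝ := if n ≤ 1 then 0 else Real.log n - 1 / 6

theorem logPotential_one : logPotential 1 = 0 := if_pos le_rfl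

theorem logPotential_of_two_le {n : ℕ} (hn : 2 ≤ n) : logPotential n = Real.log n - 1 / 6 :=
  if_neg (by omega)

theorem inv_le_logPotential_succ_sub (n : ℕ) :
    ((n : ℝ) + 2)⁻¹ ≤ logPotential (n + 2) - logPotential (n + 1) := by
  rw [logPotential_of_two_le (by omega)]
  rcases Nat.eq_zero_or_pos n with rfl | hn
  · norm_num [logPotential_one]
    linarith [Real.log_two_gt_d9]
  · rw [logPotential_of_two_le (by omega), sub_sub_sub_cancel_right, ← Real.log_div (by positivity)
      (by positivity)]
    convert Real.one_sub_inv_le_log_of_pos (x := ((n + 2 : ℕ) : ℝ) / ((n + 1 : ℕ) : ℝ))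
      (by positivity) using 1
    push_cast
    field_simp
    ring

section SmoothingSchedule

theorem smoothing_error_le {K a β μ0 L M : ℝ} (hK : 1 ≤ K) (ha : 0 ≤ a)
    (ha' : a ≤ (3 * K + 1) / 4) (hβ : 0 ≤ β) (hμ0 : 0 < μ0) (hL : 0 < L)
    (hM : L * K / μ0 ≤ M) :
    a ^ 2 * (β * (μ0 / K - μ0 / (K + 1))) + L / μ0 * (a ^ 2 * (β * (μ0 / K))) / M ≤
      3 / 2 * (β * μ0) := by
  have hK0 : 0 < K := by linarith
  have hM0 : 0 < L * K / μ0 := by positivity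
  have hsecond : L / μ0 * (a ^ 2 * (β * (μ0 / K))) / M ≤ a ^ 2 * (β * μ0) / K ^ 2 := by
    calc L / μ0 * (a ^ 2 * (β * (μ0 / K))) / M
        ≤ L / μ0 * (a ^ 2 * (β * (μ0 / K))) / (L * K / μ0) :=
          div_le_div_of_nonneg_left (by positivity) hM0 hM
      _ = a ^ 2 * (β * μ0) / K ^ 2 := by field_simp
  have hpoly : a ^ 2 * (2 * K + 1) ≤ 3 / 2 * (K ^ 2 * (K + 1)) := by
    have ha2 : a ^ 2 ≤ ((3 * K + 1) / 4) ^ 2 := pow_le_pow_left₀ ha ha' 2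
    nlinarith [mul_le_mul_of_nonneg_right ha2 (by linarith : (0 : ℝ) ≤ 2 * K + 1),
      mul_nonneg (sub_nonneg.2 hK) (by positivity : (0 : ℝ) ≤ 6 * K ^ 2 + 9 * K + 1)]
  have hsum : a ^ 2 * (β * (μ0 / K - μ0 / (K + 1))) + a ^ 2 * (β * μ0) / K ^ 2 =
      (β * μ0) * (a ^ 2 * (2 * K + 1) / (K ^ 2 * (K + 1))) := by
    field_simp
    ring
  have hfrac : a ^ 2 * (2 * K + 1) / (K ^ 2 * (K + 1)) ≤ 3 / 2 := by
    rw [div_le_iff₀ (by positivity)]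
    exact hpoly
  nlinarith [mul_le_mul_of_nonneg_left hfrac (by positivity : 0 ≤ β * μ0)]

theorem le_lipschitz_mul_logPotential_sub {β μ0 L M : ℝ} (hβ : 0 ≤ β) (hμ0 : 0 < μ0)
    (hL : 0 < L) (n : ℕ) (hM : L * (n + 2) / μ0 ≤ M) :
    3 / 2 * (β * μ0) ≤
      M / 2 * (3 * β * μ0 ^ 2 / L * (logPotential (n + 2) - logPotential (n + 1))) := by
  have hW := inv_le_logPotential_succ_sub n
  calc 3 / 2 * (β * μ0) = L * (n + 2) / μ0 / 2 * (3 * β * μ0 ^ 2 / L * ((n : ℝ) + 2)⁻¹) := by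
        field_simp
    _ ≤ M / 2 * (3 * β * μ0 ^ 2 / L * (logPotential (n + 2) - logPotential (n + 1))) := by
        have hWd := (inv_nonneg.2 (by positivity : (0 : ℝ) ≤ n + 2)).trans hW
        exact mul_le_mul (by linarith) (by gcongr) (by positivity)
          (by linarith [(by positivity : 0 ≤ L * (n + 2) / μ0)])

variable {μ Lk : ℕ → ℝ} {μ0 L L' : ℝ}

theorem lipschitz_schedule_eq (hμ : ∀ k : ℕ, μ k = μ0 / (k + 1))
    (hLk : ∀ k : ℕ, Lk k = L' + L / μ k) (k : ℕ) : Lk k = L' + L * (k + 1) / μ0 := by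
  rw [hLk, hμ]
  field_simp

theorem smoothed_potential_bound {a G D r : ℕ → ℝ} {β R2 : ℝ} (hβ : 0 ≤ β) (hμ0 : 0 < μ0)
    (hL : 0 < L) (hL' : 0 ≤ L') (hμ : ∀ k : ℕ, μ k = μ0 / (k + 1))
    (hLk : ∀ k : ℕ, Lk k = L' + L / μ k) (ha0 : a 0 = 0)
    (harec : ∀ k : ℕ, a (k + 1) = (1 + √(4 * a k ^ 2 + 1)) / 2)
    (hstep : ∀ k : ℕ, a (k + 1) ^ 2 * D k + Lk k / 2 * r (k + 1) ≤
      a k ^ 2 * G k + Lk k / 2 * r k)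
    (hG : ∀ k : ℕ, G (k + 1) ≤ D k + β * (μ k - μ (k + 1)))
    (hD : ∀ k : ℕ, -(β * μ k) ≤ D k) (hr0 : r 0 = R2) (k : ℕ) :
    a (k + 1) ^ 2 * D k + Lk k / 2 * r (k + 1) ≤
      Lk k / 2 * (R2 + 3 * β * μ0 ^ 2 / L * logPotential (k + 1)) := by
  have hLk' := lipschitz_schedule_eq hμ hLk
  induction k with
  | zero => simpa [ha0, hr0, logPotential_one] using hstep 0
  | succ n ih =>
    set K : ℝ := n + 1 with hK
    set B := R2 + 3 * β * μ0 ^ 2 / L * logPotential (n + 1)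
    have hK0 : 0 < K := by positivity
    have hLn : Lk n = L' + L * K / μ0 := hLk' n
    have hLn1 : Lk (n + 1) = Lk n + L / μ0 := by rw [hLk', hLn]; push_cast; ring
    have hLpos : 0 < Lk n := by rw [hLn]; positivity
    have hμn : μ n = μ0 / K := hμ n
    have hμn1 : μ (n + 1) = μ0 / (K + 1) := by rw [hμ]; push_cast; ring
    have herr := smoothing_error_le (K := K) (a := a (n + 1)) (M := Lk n) (by simp [hK])
      (by linarith [nesterov_seq_lower ha0 harec n])
      (by linarith [nesterov_seq_upper ha0 harec n]) hβ hμ0 hL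
      (by rw [hLn]; linarith)
    have hpot := le_lipschitz_mul_logPotential_sub hβ hμ0 hL n
      (M := Lk (n + 1)) (by rw [hLk' (n + 1)]; push_cast; ring_nf; linarith)
    have hr : Lk n / 2 * r (n + 1) ≤ Lk n / 2 * B + a (n + 1) ^ 2 * (β * μ n) := by
      nlinarith [hD n]
    calc a (n + 2) ^ 2 * D (n + 1) + Lk (n + 1) / 2 * r (n + 2)
        ≤ a (n + 1) ^ 2 * G (n + 1) + Lk (n + 1) / 2 * r (n + 1) := hstep (n + 1)
      _ ≤ a (n + 1) ^ 2 * (D n + β * (μ n - μ (n + 1))) + Lk (n + 1) / 2 * r (n + 1) := by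
          gcongr; exact hG n
      _ = (a (n + 1) ^ 2 * D n + Lk n / 2 * r (n + 1)) + a (n + 1) ^ 2 * (β * (μ n - μ (n + 1)))
          + L / μ0 / Lk n * (Lk n / 2 * r (n + 1)) := by
          rw [hLn1]; field_simp; ring
      _ ≤ Lk n / 2 * B + a (n + 1) ^ 2 * (β * (μ n - μ (n + 1)))
          + L / μ0 / Lk n * (Lk n / 2 * B + a (n + 1) ^ 2 * (β * μ n)) := by
          gcongr
      _ = Lk (n + 1) / 2 * B + (a (n + 1) ^ 2 * (β * (μ0 / K - μ0 / (K + 1)))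
          + L / μ0 * (a (n + 1) ^ 2 * (β * (μ0 / K))) / Lk n) := by
          rw [hLn1, ← hμn, ← hμn1]; field_simp; ring
      _ ≤ Lk (n + 1) / 2 * (R2 + 3 * β * μ0 ^ 2 / L * logPotential (n + 1 + 1)) := by
          linarith

end SmoothingSchedule

theorem gap_le_of_potential_bound {K A D gap M ρ β μ0 L L' R2 : ℝ} (hK : 2 ≤ K) (hβ : 0 ≤ β)
    (hμ0 : 0 < μ0) (hL : 0 < L) (hL' : 0 ≤ L') (hR2 : 0 ≤ R2) (hA : (K + 1) / 2 ≤ A)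
    (hM : M = L' + L * K / μ0) (hρ : 0 ≤ ρ)
    (hpot : A ^ 2 * D + M / 2 * ρ ≤ M / 2 * (R2 + 3 * β * μ0 ^ 2 / L * (Real.log K - 1 / 6)))
    (hgap : gap ≤ D + β * (μ0 / K)) :
    gap ≤ (2 * L * R2 + 6 * β * μ0 ^ 2 * Real.log K) / (μ0 * K)
      + 2 * (L' + L / μ0) * (R2 + (3 * β * μ0 ^ 2 / L) * Real.log K) / K ^ 2 := by
  set c := 3 * β * μ0 ^ 2 / L
  set Q := R2 + c * (Real.log K - 1 / 6)
  have hK0 : 0 < K := by linarith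
  have hlog : 1 / 6 ≤ Real.log K := by
    linarith [Real.log_le_log two_pos hK, Real.log_two_gt_d9]
  have hc : 0 ≤ c := by positivity
  have hQ : 0 ≤ Q := add_nonneg hR2 (mul_nonneg hc (by linarith))
  have hQ' : Q ≤ R2 + c * Real.log K := by
    simp only [Q]
    nlinarith
  have hM0 : 0 ≤ M := by rw [hM]; positivity
  have hD : D ≤ 2 * M * Q / (K + 1) ^ 2 := by
    rcases le_or_gt D 0 with hD0 | hD0
    · exact hD0.trans (by positivity)
    · rw [le_div_iff₀ (by positivity)]
      nlinarith [mul_le_mul_of_nonneg_right (pow_le_pow_left₀ (by positivity) hA 2) hD0.le,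
        mul_nonneg hM0 hρ]
  have hL'term : 2 * L' * Q / (K + 1) ^ 2 ≤ 2 * (L' + L / μ0) * (R2 + c * Real.log K) / K ^ 2 := by
    apply div_le_div₀ (by positivity) _ (by positivity) (by nlinarith)
    have : 0 ≤ L / μ0 := by positivity
    nlinarith
  have hLterm : 2 * (L * K / μ0) * Q / (K + 1) ^ 2 ≤ 2 * L * Q / (μ0 * K) := by
    rw [div_le_div_iff₀ (by positivity) (by positivity)]
    have : 2 * (L * K / μ0) * Q * (μ0 * K) = 2 * L * Q * K ^ 2 := by field_simp
    rw [this]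
    nlinarith [mul_nonneg hL.le hQ]
  have hsmooth : β * (μ0 / K) + 2 * L * Q / (μ0 * K) =
      (2 * L * R2 + 6 * β * μ0 ^ 2 * Real.log K) / (μ0 * K) := by
    simp only [Q, c]
    field_simp
    ring
  have hsplit : 2 * M * Q / (K + 1) ^ 2 =
      2 * L' * Q / (K + 1) ^ 2 + 2 * (L * K / μ0) * Q / (K + 1) ^ 2 := by
    rw [hM]; ring
  linarith

theorem stmt_17_general (m : ℕ) (S : Set (EuclideanSpace ℝ (Fin m)))
    (hScv : Convex ℝ S)
    (f : ℝ → EuclideanSpace ℝ (Fin m) → ℝ)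
    (β μ0 L L' : ℝ) (hβ : 0 < β) (hμ0 : 0 < μ0) (hL : 0 < L) (hL' : 0 ≤ L')
    -- Assumption 1: convexity, differentiability, Lipschitz gradient, sandwich
    (hconv : ∀ μ : ℝ, 0 < μ → ConvexOn ℝ S (f μ))
    (hdiff : ∀ μ : ℝ, 0 < μ → ∀ w ∈ S, DifferentiableAt ℝ (f μ) w)
    (hlip : ∀ μ : ℝ, 0 < μ →
      LipschitzOnWith (Real.toNNReal (L' + L / μ)) (gradient (f μ)) S)
    (hsandwich : ∀ w ∈ S, ∀ μ₁ μ₂ : ℝ, 0 ≤ μ₂ → μ₂ ≤ μ₁ →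
      0 ≤ f μ₂ w - f μ₁ w ∧ f μ₂ w - f μ₁ w ≤ β * (μ₁ - μ₂))
    (xstar : EuclideanSpace ℝ (Fin m)) (hxstarS : xstar ∈ S)
    (hmin : ∀ w ∈ S, f 0 xstar ≤ f 0 w)
    -- Algorithm 1 (S-APG)
    (μ : ℕ → ℝ) (hμ : ∀ k : ℕ, μ k = μ0 / (k + 1))
    (Lk : ℕ → ℝ) (hLk : ∀ k : ℕ, Lk k = L' + L / μ k)
    (a : ℕ → ℝ) (ha0 : a 0 = 0)
    (harec : ∀ k : ℕ, a (k + 1) = (1 + Real.sqrt (4 * (a k) ^ 2 + 1)) / 2)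
    (x y z : ℕ → EuclideanSpace ℝ (Fin m))
    (hx0 : x 0 = z 0) (hx0S : x 0 ∈ S)
    (hy : ∀ k : ℕ, y k = (1 - 1 / a (k + 1)) • x k + (1 / a (k + 1)) • z k)
    (hzS : ∀ k : ℕ, z (k + 1) ∈ S)
    (hproj : ∀ k : ℕ, ∀ w ∈ S,
      ‖z (k + 1) - (z k - (a (k + 1) / Lk k) • gradient (f (μ k)) (y k))‖ ≤
        ‖w - (z k - (a (k + 1) / Lk k) • gradient (f (μ k)) (y k))‖)
    (hxrec : ∀ k : ℕ, x (k + 1) = (1 - 1 / a (k + 1)) • x k + (1 / a (k + 1)) • z (k + 1))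
    :
    ∀ k : ℕ, 2 ≤ k →
      f 0 (x k) - f 0 xstar ≤
        (2 * L * ‖x 0 - xstar‖ ^ 2 + 6 * β * μ0 ^ 2 * Real.log k) / (μ0 * k)
        + 2 * (L' + L / μ0) * (‖x 0 - xstar‖ ^ 2 + (3 * β * μ0 ^ 2 / L) * Real.log k) / k ^ 2 := by
  have hμpos (k : ℕ) : 0 < μ k := by rw [hμ]; positivity
  have hμanti (k : ℕ) : μ (k + 1) ≤ μ k := by rw [hμ, hμ]; gcongr; linarith
  have hLpos (k : ℕ) : 0 < Lk k := by rw [lipschitz_schedule_eq hμ hLk]; positivity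
  have ha1 (k : ℕ) : 1 ≤ a (k + 1) := harec k ▸ one_le_nesterov (a k)
  have hmem := accelerated_iterates_mem hScv ha1 hx0 hx0S hzS hxrec
  have hgap : ∀ w ∈ S, ∀ μ₁ μ₂ : ℝ, 0 ≤ μ₂ → μ₂ ≤ μ₁ →
      f μ₂ w - f μ₂ xstar ≤ f μ₁ w - f μ₁ xstar + β * (μ₁ - μ₂) := fun w hw μ₁ μ₂ h0 h12 ↦ by
    linarith [(hsandwich w hw μ₁ μ₂ h0 h12).2, (hsandwich xstar hxstarS μ₁ μ₂ h0 h12).1]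
  have hstep (k : ℕ) : a (k + 1) ^ 2 * (f (μ k) (x (k + 1)) - f (μ k) xstar)
      + Lk k / 2 * ‖z (k + 1) - xstar‖ ^ 2 ≤
      a k ^ 2 * (f (μ k) (x k) - f (μ k) xstar) + Lk k / 2 * ‖z k - xstar‖ ^ 2 := by
    have := (hconv _ (hμpos k)).accelerated_projected_gradient_step hScv (hdiff _ (hμpos k))
      (hLpos k) (hLk k ▸ hlip _ (hμpos k)) (ha1 k) (hmem k).1 (hmem k).2 (hzS k) hxstarS
      (by simpa only [hy] using hproj k)
    rwa [← hxrec, harec k, nesterov_sq_sub_self, ← harec k] at this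
  have hpot := smoothed_potential_bound (G := fun k ↦ f (μ k) (x k) - f (μ k) xstar)
    (D := fun k ↦ f (μ k) (x (k + 1)) - f (μ k) xstar) (r := fun k ↦ ‖z k - xstar‖ ^ 2)
    (R2 := ‖x 0 - xstar‖ ^ 2)
    hβ.le hμ0 hL hL' hμ hLk ha0 harec hstep
    (fun k ↦ hgap _ (hmem (k + 1)).1 _ _ (hμpos (k + 1)).le (hμanti k))
    (fun k ↦ by
      linarith [hgap _ (hmem (k + 1)).1 _ 0 le_rfl (hμpos k).le, hmin _ (hmem (k + 1)).1])
    (by rw [hx0])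
  intro k hk
  obtain ⟨j, rfl⟩ : ∃ j, k = j + 1 := ⟨k - 1, by omega⟩
  refine gap_le_of_potential_bound (A := a (j + 1)) (D := f (μ j) (x (j + 1)) - f (μ j) xstar)
    (M := Lk j) (ρ := ‖z (j + 1) - xstar‖ ^ 2)
    (by exact_mod_cast hk) hβ.le hμ0 hL hL' (by positivity) ?_ ?_ (by positivity) ?_ ?_
  · push_cast; linarith [nesterov_seq_lower ha0 harec j]
  · rw [lipschitz_schedule_eq hμ hLk]; push_cast; ring
  · simpa only [logPotential_of_two_le hk] using hpot j
  · simpa [hμ] using hgap _ (hmem (j + 1)).1 _ 0 le_rfl (hμpos j).le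

theorem stmt_17 (m : ℕ) (S : Set (EuclideanSpace ℝ (Fin m)))
    (hS : S.Nonempty) (hSc : IsClosed S) (hScv : Convex ℝ S)
    (f : ℝ → EuclideanSpace ℝ (Fin m) → ℝ)
    (β μ0 L L' : ℝ) (hβ : 0 < β) (hμ0 : 0 < μ0) (hL : 0 < L) (hL' : 0 ≤ L')
    -- Assumption 1: convexity, differentiability, Lipschitz gradient, sandwich
    (hconv : ∀ μ : ℝ, 0 < μ → ConvexOn ℝ S (f μ))
    (hdiff : ∀ μ : ℝ, 0 < μ → ∀ w ∈ S, DifferentiableAt ℝ (f μ) w)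
    (hlip : ∀ μ : ℝ, 0 < μ →
      LipschitzOnWith (Real.toNNReal (L' + L / μ)) (gradient (f μ)) S)
    (hsandwich : ∀ w ∈ S, ∀ μ₁ μ₂ : ℝ, 0 ≤ μ₂ → μ₂ ≤ μ₁ →
      0 ≤ f μ₂ w - f μ₁ w ∧ f μ₂ w - f μ₁ w ≤ β * (μ₁ - μ₂))
    (xstar : EuclideanSpace ℝ (Fin m)) (hxstarS : xstar ∈ S)
    (hmin : ∀ w ∈ S, f 0 xstar ≤ f 0 w)
    -- Algorithm 1 (S-APG)
    (μ : ℕ → ℝ) (hμ : ∀ k : ℕ, μ k = μ0 / (k + 1))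
    (Lk : ℕ → ℝ) (hLk : ∀ k : ℕ, Lk k = L' + L / μ k)
    (a : ℕ → ℝ) (ha0 : a 0 = 0)
    (harec : ∀ k : ℕ, a (k + 1) = (1 + Real.sqrt (4 * (a k) ^ 2 + 1)) / 2)
    (x y z : ℕ → EuclideanSpace ℝ (Fin m))
    (hx0 : x 0 = z 0) (hx0S : x 0 ∈ S)
    (hy : ∀ k : ℕ, y k = (1 - 1 / a (k + 1)) • x k + (1 / a (k + 1)) • z k)
    (hzS : ∀ k : ℕ, z (k + 1) ∈ S)
    (hproj : ∀ k : ℕ, ∀ w ∈ S,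
      ‖z (k + 1) - (z k - (a (k + 1) / Lk k) • gradient (f (μ k)) (y k))‖ ≤
        ‖w - (z k - (a (k + 1) / Lk k) • gradient (f (μ k)) (y k))‖)
    (hxrec : ∀ k : ℕ, x (k + 1) = (1 - 1 / a (k + 1)) • x k + (1 / a (k + 1)) • z (k + 1))
    :
    ∀ k : ℕ, 2 ≤ k →
      f 0 (x k) - f 0 xstar ≤
        (2 * L * ‖x 0 - xstar‖ ^ 2 + 6 * β * μ0 ^ 2 * Real.log k) / (μ0 * k)
        + 2 * (L' + L / μ0) * (‖x 0 - xstar‖ ^ 2 + (3 * β * μ0 ^ 2 / L) * Real.log k) / k ^ 2 :=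
  stmt_17_general m S hScv f β μ0 L L' hβ hμ0 hL hL' hconv hdiff hlip hsandwich xstar hxstarS hmin μ
    hμ Lk hLk a ha0 harec x y z hx0 hx0S hy hzS hproj hxrec
end
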